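/- Let u be a conforming primal function, set p := ∇u and f := −div p + u, let ũ : Ω → ℝ be an arbitrary square-integrable function, and let p̃ be a conforming flux. Then for every conforming primal function φ and every γ > 0, the estimate ‖u − ũ‖² + ‖p − p̃‖² ≤ (1 + 1/γ)(‖f − φ + div p̃‖² + ‖p̃ − ∇φ‖²) + (1 + γ)‖φ − ũ‖² holds. -/

import Mathlib

open MeasureTheory Real

noncomputable section

/-- Euclidean space `ℝᵈ`. -/
abbrev Euc (d : ℕ) := EuclideanSpace ℝ (Fin d)

/-- Divergence of a vector field, as the trace of its Fréchet derivative. -/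
def vdiv {d : ℕ} (p : Euc d → Euc d) (x : Euc d) : ℝ :=
  LinearMap.trace ℝ (Euc d) (fderiv ℝ p x).toLinearMap

/-- Laplacian `Δ = div ∘ ∇`. -/
def lap {d : ℕ} (u : Euc d → ℝ) (x : Euc d) : ℝ := vdiv (gradient u) x

/-- Squared `L²(Ω)` norm of a scalar function, `‖g‖² = ∫_Ω |g|²`. -/
def nsq {d : ℕ} (Ω : Set (Euc d)) (g : Euc d → ℝ) : ℝ := ∫ x in Ω, (g x) ^ 2

/-- Squared `L²(Ω)` norm of a vector field, `‖g‖² = ∫_Ω |g|²`. -/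
def nsqV {d : ℕ} (Ω : Set (Euc d)) (g : Euc d → Euc d) : ℝ := ∫ x in Ω, ‖g x‖ ^ 2

/-- A conforming primal function for `Ω`: a smooth function `ℝᵈ → ℝ` whose support is
compact and contained in `Ω`. -/
def ConformingPrimal {d : ℕ} (Ω : Set (Euc d)) (u : Euc d → ℝ) : Prop :=
  ContDiff ℝ (⊤ : ℕ∞) u ∧ HasCompactSupport u ∧ tsupport u ⊆ Ω

/-- A conforming flux: a `C¹` vector field `ℝᵈ → ℝᵈ` with compact support. -/
def ConformingFlux {d : ℕ} (p : Euc d → Euc d) : Prop :=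
  ContDiff ℝ 1 p ∧ HasCompactSupport p

lemma vdiv_eq_sum {d : ℕ} (q : Euc d → Euc d) (x : Euc d) :
    vdiv q x = ∑ i, fderiv ℝ q x (EuclideanSpace.single i 1) i := by
  rw [vdiv, LinearMap.trace_eq_matrix_trace ℝ (EuclideanSpace.basisFun (Fin d) ℝ).toBasis,
    Matrix.trace]
  simp [Matrix.diag, LinearMap.toMatrix_apply]

lemma inner_gradient' {d : ℕ} (v : Euc d → ℝ) (x y : Euc d) :
    inner ℝ (gradient v x) y = fderiv ℝ v x y :=
  InnerProductSpace.toDual_symm_apply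

lemma gradient_apply_coord {d : ℕ} (v : Euc d → ℝ) (x : Euc d) (i : Fin d) :
    gradient v x i = fderiv ℝ v x (EuclideanSpace.single i 1) := by
  rw [← inner_gradient', EuclideanSpace.inner_single_right]
  simp

lemma inner_eq_sum {d : ℕ} (a b : Euc d) : (inner ℝ a b : ℝ) = ∑ i, a i * b i := by
  simp [PiLp.inner_apply, mul_comm]

lemma cont_fderiv_apply {d : ℕ} {F : Type*} [NormedAddCommGroup F] [NormedSpace ℝ F]
    {q : Euc d → F} (hq : ContDiff ℝ 1 q) (w : Euc d) :
    Continuous (fun x => fderiv ℝ q x w) :=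
  (hq.continuous_fderiv one_ne_zero).clm_apply continuous_const

lemma cont_vdiv {d : ℕ} {q : Euc d → Euc d} (hq : ContDiff ℝ 1 q) :
    Continuous (vdiv q) := by
  simp only [funext (vdiv_eq_sum q)]
  exact continuous_finset_sum _ fun i _ =>
    (EuclideanSpace.proj (𝕜 := ℝ) i).continuous.comp (cont_fderiv_apply hq _)

lemma hcs_comp_zero {d : ℕ} {q : Euc d → Euc d} (hqs : HasCompactSupport q)
    {E : Type*} [TopologicalSpace E] [Zero E] (g : Euc d → E) (hg : g 0 = 0) :
    HasCompactSupport (fun x => g (q x)) :=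
  hqs.comp_left (g := g) hg

lemma hcs_fderiv {d : ℕ} {F : Type*} [NormedAddCommGroup F] [NormedSpace ℝ F]
    {q : Euc d → F} (hqs : HasCompactSupport q) (w : Euc d) :
    HasCompactSupport (fun x => fderiv ℝ q x w) := by
  have h := hqs.fderiv ℝ
  exact h.comp_left (g := fun L : Euc d →L[ℝ] F => L w) (by simp)

lemma fderiv_coord {d : ℕ} {q : Euc d → Euc d} (hq : ContDiff ℝ 1 q)
    (x w : Euc d) (i : Fin d) :
    fderiv ℝ (fun y => q y i) x w = fderiv ℝ q x w i := by
  have h : (fun y => q y i) = (EuclideanSpace.proj (𝕜 := ℝ) i) ∘ q := rfl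
  rw [h, fderiv_comp x (EuclideanSpace.proj (𝕜 := ℝ) i).differentiableAt
    (hq.differentiable one_ne_zero x)]
  rw [(EuclideanSpace.proj (𝕜 := ℝ) i).fderiv]; rfl

lemma contDiff_gradient {d : ℕ} {v : Euc d → ℝ} (hv : ContDiff ℝ (⊤ : ℕ∞) v) :
    ContDiff ℝ (⊤ : ℕ∞) (gradient v) :=
  ((InnerProductSpace.toDual ℝ (Euc d)).symm.contDiff).comp (hv.fderiv_right (by simp))

lemma hcs_gradient {d : ℕ} {v : Euc d → ℝ} (hvs : HasCompactSupport v) :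
    HasCompactSupport (gradient v) :=
  (hvs.fderiv ℝ).comp_left
    (g := fun L => (InnerProductSpace.toDual ℝ (Euc d)).symm L) (by simp)

lemma ibp1 {d : ℕ} {a b : Euc d → ℝ} {w : Euc d}
    (h1 : Integrable (fun x => fderiv ℝ a x w * b x))
    (h2 : Integrable (fun x => a x * fderiv ℝ b x w))
    (h3 : Integrable (fun x => a x * b x))
    (ha : Differentiable ℝ a) (hb : Differentiable ℝ b) :
    ∫ x, a x * fderiv ℝ b x w = - ∫ x, fderiv ℝ a x w * b x :=
  integral_mul_fderiv_eq_neg_fderiv_mul_of_integrable h1 h2 h3 (fun x _ => ha x) (fun x _ => hb x)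

lemma ibp {d : ℕ} {v : Euc d → ℝ} {q : Euc d → Euc d}
    (hv : ContDiff ℝ (⊤ : ℕ∞) v) (hvs : HasCompactSupport v)
    (hq : ContDiff ℝ 1 q) (hqs : HasCompactSupport q) :
    ∫ x, v x * vdiv q x = - ∫ x, (inner ℝ (gradient v x) (q x) : ℝ) := by
  have hvc : Continuous v := hv.continuous
  have hqc : Continuous q := hq.continuous
  have hqi : ∀ i : Fin d, Continuous (fun x => q x i) :=
    fun i => (EuclideanSpace.proj (𝕜 := ℝ) i).continuous.comp hqc
  have hqsi : ∀ i : Fin d, HasCompactSupport (fun x => q x i) :=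
    fun i => hqs.comp_left (g := fun y : Euc d => y i) rfl
  have key : ∀ i : Fin d,
      ∫ x, v x * fderiv ℝ q x (EuclideanSpace.single i 1) i
      = - ∫ x, fderiv ℝ v x (EuclideanSpace.single i 1) * q x i := by
    intro i
    have e1 : ∀ x, fderiv ℝ (fun y => q y i) x (EuclideanSpace.single i 1)
        = fderiv ℝ q x (EuclideanSpace.single i 1) i := fun x => fderiv_coord hq x _ i
    have h1 : Integrable (fun x => fderiv ℝ v x (EuclideanSpace.single i 1) * q x i) :=
      ((cont_fderiv_apply (hv.of_le (by simp)) _).mul (hqi i)).integrable_of_hasCompactSupport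
        ((hcs_fderiv hvs _)).mul_right
    have h2 : Integrable (fun x => v x * fderiv ℝ (fun y => q y i) x
        (EuclideanSpace.single i 1)) := by
      refine Integrable.congr ((hvc.mul ((EuclideanSpace.proj (𝕜 := ℝ) i).continuous.comp
        (cont_fderiv_apply hq (EuclideanSpace.single i 1)))).integrable_of_hasCompactSupport
        hvs.mul_right) ?_
      filter_upwards with x using by simp only [Function.comp_apply, e1]; rfl
    have h3 : Integrable (fun x => v x * q x i) :=
      (hvc.mul (hqi i)).integrable_of_hasCompactSupport hvs.mul_right
    have hb : Differentiable ℝ (fun y => q y i) :=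
      (EuclideanSpace.proj (𝕜 := ℝ) i).differentiable.comp (hq.differentiable one_ne_zero)
    have := ibp1 h1 h2 h3 (hv.differentiable (by simp)) hb
    simp only [e1] at this
    exact this
  calc ∫ x, v x * vdiv q x
      = ∫ x, ∑ i, v x * fderiv ℝ q x (EuclideanSpace.single i 1) i := by
        simp only [vdiv_eq_sum, Finset.mul_sum]
    _ = ∑ i, ∫ x, v x * fderiv ℝ q x (EuclideanSpace.single i 1) i := by
        refine integral_finset_sum _ fun i _ => ?_
        exact (hvc.mul ((EuclideanSpace.proj (𝕜 := ℝ) i).continuous.comp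
          (cont_fderiv_apply hq _))).integrable_of_hasCompactSupport hvs.mul_right
    _ = ∑ i, - ∫ x, fderiv ℝ v x (EuclideanSpace.single i 1) * q x i :=
        Finset.sum_congr rfl fun i _ => key i
    _ = - ∑ i, ∫ x, fderiv ℝ v x (EuclideanSpace.single i 1) * q x i := by
        simp
    _ = - ∫ x, ∑ i, fderiv ℝ v x (EuclideanSpace.single i 1) * q x i := by
        congr 1
        refine (integral_finset_sum _ fun i _ => ?_).symm
        exact ((cont_fderiv_apply (hv.of_le (by simp)) _).mul
          ((EuclideanSpace.proj (𝕜 := ℝ) i).continuous.comp hqc)).integrable_of_hasCompactSupport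
          (hcs_fderiv hvs _).mul_right
    _ = - ∫ x, (inner ℝ (gradient v x) (q x) : ℝ) := by
        congr 1
        refine integral_congr_ae (Filter.Eventually.of_forall fun x => ?_)
        simp only [inner_eq_sum, gradient_apply_coord]

lemma vdiv_sub {d : ℕ} {q1 q2 : Euc d → Euc d} {x : Euc d}
    (h1 : DifferentiableAt ℝ q1 x) (h2 : DifferentiableAt ℝ q2 x) :
    vdiv (fun y => q1 y - q2 y) x = vdiv q1 x - vdiv q2 x := by
  simp only [vdiv, fderiv_fun_sub h1 h2]
  simp

lemma gradient_sub' {d : ℕ} {a b : Euc d → ℝ} {x : Euc d}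
    (h1 : DifferentiableAt ℝ a x) (h2 : DifferentiableAt ℝ b x) :
    gradient (fun y => a y - b y) x = gradient a x - gradient b x := by
  show (InnerProductSpace.toDual ℝ (Euc d)).symm _ = _
  rw [fderiv_fun_sub h1 h2, map_sub]
  rfl

lemma tsupport_sub_subset {X α : Type*} [TopologicalSpace X] [SubtractionMonoid α]
    {a b : X → α} : tsupport (fun x => a x - b x) ⊆ tsupport a ∪ tsupport b := by
  have h : Function.support (fun x => a x - b x)
      ⊆ Function.support a ∪ Function.support b := by
    intro x hx
    by_contra h
    simp only [Set.mem_union, Function.mem_support, not_or, not_not] at h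
    exact hx (by simp [h.1, h.2])
  calc tsupport (fun x => a x - b x) ⊆ closure (Function.support a ∪ Function.support b) :=
        closure_mono h
    _ = tsupport a ∪ tsupport b := closure_union

lemma hcs_vdiv {d : ℕ} {q : Euc d → Euc d} (hqs : HasCompactSupport q) :
    HasCompactSupport (vdiv q) :=
  (hqs.fderiv ℝ).comp_left
    (g := fun L : Euc d →L[ℝ] Euc d => LinearMap.trace ℝ (Euc d) L.toLinearMap) (by simp)

lemma tsupport_gradient_subset {d : ℕ} {v : Euc d → ℝ} :
    tsupport (gradient v) ⊆ tsupport v := by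
  refine (closure_mono ?_).trans (tsupport_fderiv_subset ℝ)
  intro x hx
  simp only [Function.mem_support] at hx ⊢
  intro h
  exact hx (by show (InnerProductSpace.toDual ℝ (Euc d)).symm _ = 0; rw [h]; simp)

lemma hcs_sub {X α : Type*} [TopologicalSpace X] [SubtractionMonoid α]
    {a b : X → α} (ha : HasCompactSupport a) (hb : HasCompactSupport b) :
    HasCompactSupport (fun x => a x - b x) :=
  IsCompact.of_isClosed_subset (ha.union hb) isClosed_closure tsupport_sub_subset

lemma young_sq {γ : ℝ} (hγ : 0 < γ) (a b : ℝ) :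
    (a + b) ^ 2 ≤ (1 + 1/γ) * a ^ 2 + (1 + γ) * b ^ 2 := by
  have key : 0 ≤ (a - γ * b) ^ 2 / γ := by positivity
  have expand : (1 + 1/γ) * a ^ 2 + (1 + γ) * b ^ 2 - (a + b) ^ 2
      = (a - γ * b) ^ 2 / γ := by field_simp; ring
  linarith

set_option maxHeartbeats 2000000 in
/-- Upper bound for a semi-conforming (non-conforming primal, conforming dual)
approximation of the reaction-diffusion problem. -/
theorem stmt7 (d : ℕ) (hd : 1 ≤ d) (Ω : Set (Euc d)) (hΩ : IsOpen Ω)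
    (u : Euc d → ℝ) (hu : ConformingPrimal Ω u)
    (p : Euc d → Euc d) (hp : p = gradient u)
    (f : Euc d → ℝ) (hf : f = fun x => -vdiv p x + u x)
    (ut : Euc d → ℝ) (hut : MemLp ut 2 (volume.restrict Ω))
    (pt : Euc d → Euc d) (hpt : ConformingFlux pt)
    (φ : Euc d → ℝ) (hφ : ConformingPrimal Ω φ)
    (γ : ℝ) (hγ : 0 < γ) :
    nsq Ω (fun x => u x - ut x) + nsqV Ω (fun x => p x - pt x)
    ≤ (1 + 1 / γ) * (nsq Ω (fun x => f x - φ x + vdiv pt x)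
        + nsqV Ω (fun x => pt x - gradient φ x))
      + (1 + γ) * nsq Ω (fun x => φ x - ut x) := by
  obtain ⟨hu1, hu2, hu3⟩ := hu
  obtain ⟨hφ1, hφ2, hφ3⟩ := hφ
  obtain ⟨hpt1, hpt2⟩ := hpt
  set v : Euc d → ℝ := fun x => u x - φ x with hv_def
  set e : Euc d → Euc d := fun x => p x - pt x with he_def
  set w : Euc d → ℝ := fun x => φ x - ut x with hw_def
  have hpC : ContDiff ℝ (⊤ : ℕ∞) p := hp ▸ contDiff_gradient hu1
  have hpS : HasCompactSupport p := hp ▸ hcs_gradient hu2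
  have hvC : ContDiff ℝ (⊤ : ℕ∞) v := hu1.sub hφ1
  have hvS : HasCompactSupport v := hcs_sub hu2 hφ2
  have hvΩ : tsupport v ⊆ Ω := tsupport_sub_subset.trans (Set.union_subset hu3 hφ3)
  have heC : ContDiff ℝ 1 e := (hpC.of_le (by simp)).sub hpt1
  have heS : HasCompactSupport e := hcs_sub hpS hpt2
  -- pointwise identities
  have hr : ∀ x, f x - φ x + vdiv pt x = v x - vdiv e x := by
    intro x
    have h := vdiv_sub (q1 := p) (q2 := pt) (x := x)
      (hpC.differentiable (by simp) x) (hpt1.differentiable one_ne_zero x)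
    rw [hf]
    show -vdiv p x + u x - φ x + vdiv pt x = v x - vdiv e x
    simp only [he_def, hv_def, h]
    ring
  have hs : ∀ x, pt x - gradient φ x = gradient v x - e x := by
    intro x
    have hg := gradient_sub' (a := u) (b := φ) (x := x)
      (hu1.differentiable (by simp) x) (hφ1.differentiable (by simp) x)
    simp only [hv_def, he_def, hg, hp]
    abel
  -- rewrite goal in terms of v, e, w
  have hrfun : (fun x => f x - φ x + vdiv pt x) = fun x => v x - vdiv e x := funext hr
  have hsfun : (fun x => pt x - gradient φ x) = fun x => gradient v x - e x := funext hs
  have hufun : (fun x => u x - ut x) = fun x => v x + w x := by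
    funext x; simp only [hv_def, hw_def]; ring
  rw [hrfun, hsfun, hufun]
  simp only [nsq, nsqV]
  -- basic continuity and integrability
  have hvc : Continuous v := hvC.continuous
  have hec : Continuous e := heC.continuous
  have hdivec : Continuous (vdiv e) := cont_vdiv heC
  have hdiveS : HasCompactSupport (vdiv e) := hcs_vdiv heS
  have hgvc : Continuous (gradient v) := (contDiff_gradient hvC).continuous
  have hgvS : HasCompactSupport (gradient v) := hcs_gradient hvS
  have intcc : ∀ {g : Euc d → ℝ}, Continuous g → HasCompactSupport g →
      Integrable g (volume.restrict Ω) :=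
    fun hc hs => (hc.integrable_of_hasCompactSupport hs).integrableOn
  have iA : Integrable (fun x => v x ^ 2) (volume.restrict Ω) :=
    intcc (hvc.pow 2) (hvS.comp_left (g := fun t : ℝ => t ^ 2) (by simp))
  have iB : Integrable (fun x => ‖e x‖ ^ 2) (volume.restrict Ω) :=
    intcc ((hec.norm).pow 2) (heS.comp_left (g := fun y : Euc d => ‖y‖ ^ 2) (by simp))
  have iR : Integrable (fun x => (v x - vdiv e x) ^ 2) (volume.restrict Ω) :=
    intcc ((hvc.sub hdivec).pow 2)
      ((hcs_sub hvS hdiveS).comp_left (g := fun t : ℝ => t ^ 2) (by simp))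
  have hgveS : HasCompactSupport (fun x => gradient v x - e x) := hcs_sub hgvS heS
  have hgvec : Continuous (fun x => gradient v x - e x) := hgvc.sub hec
  have iS : Integrable (fun x => ‖gradient v x - e x‖ ^ 2) (volume.restrict Ω) :=
    intcc ((hgvec.norm).pow 2) (hgveS.comp_left (g := fun y : Euc d => ‖y‖ ^ 2) (by simp))
  have irv : Integrable (fun x => (v x - vdiv e x) * v x) (volume.restrict Ω) :=
    intcc ((hvc.sub hdivec).mul hvc) hvS.mul_left
  have ivd : Integrable (fun x => v x * vdiv e x) (volume.restrict Ω) :=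
    intcc (hvc.mul hdivec) hvS.mul_right
  have igve : Integrable (fun x => (inner ℝ (gradient v x) (e x) : ℝ)) (volume.restrict Ω) :=
    intcc (hgvc.inner hec)
      (heS.mono (fun x hx => by
        simp only [Function.mem_support] at hx ⊢
        intro h0; exact hx (by rw [h0, inner_zero_right])))
  have ise : Integrable (fun x => (inner ℝ (gradient v x - e x) (e x) : ℝ)) (volume.restrict Ω) :=
    intcc (hgvec.inner hec)
      (heS.mono (fun x hx => by
        simp only [Function.mem_support] at hx ⊢
        intro h0; exact hx (by rw [h0, inner_zero_right])))
  have iW : Integrable (fun x => w x ^ 2) (volume.restrict Ω) :=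
    ((hφ1.continuous.memLp_of_hasCompactSupport hφ2).sub hut).integrable_sq
  -- integration by parts over Ω
  have ibpΩ : ∫ x in Ω, v x * vdiv e x
      = - ∫ x in Ω, (inner ℝ (gradient v x) (e x) : ℝ) := by
    rw [setIntegral_eq_integral_of_forall_compl_eq_zero (f := fun x => v x * vdiv e x)
        (fun x hx => by
          have h0 : v x = 0 := image_eq_zero_of_notMem_tsupport (fun h => hx (hvΩ h))
          simp [h0]),
      setIntegral_eq_integral_of_forall_compl_eq_zero
        (f := fun x => (inner ℝ (gradient v x) (e x) : ℝ))
        (fun x hx => by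
          have h0 : gradient v x = 0 := image_eq_zero_of_notMem_tsupport
            (fun h => hx (hvΩ (tsupport_gradient_subset h)))
          simp [h0])]
    exact ibp hvC hvS heC heS
  -- the Prager–Synge-type identity
  have i1 : ∫ x in Ω, (v x - vdiv e x) * v x
      = (∫ x in Ω, v x ^ 2) - ∫ x in Ω, v x * vdiv e x := by
    rw [← integral_sub iA ivd]
    refine integral_congr_ae (Filter.Eventually.of_forall fun x => ?_)
    ring
  have i2 : ∫ x in Ω, (inner ℝ (gradient v x - e x) (e x) : ℝ)
      = (∫ x in Ω, (inner ℝ (gradient v x) (e x) : ℝ)) - ∫ x in Ω, ‖e x‖ ^ 2 := by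
    rw [← integral_sub igve iB]
    refine integral_congr_ae (Filter.Eventually.of_forall fun x => ?_)
    simp only [inner_sub_left, real_inner_self_eq_norm_sq]
  have hAB : (∫ x in Ω, v x ^ 2) + (∫ x in Ω, ‖e x‖ ^ 2)
      = (∫ x in Ω, (v x - vdiv e x) * v x)
        - ∫ x in Ω, (inner ℝ (gradient v x - e x) (e x) : ℝ) := by
    rw [i1, i2, ibpΩ]; ring
  -- bounds on the two integrals
  have hb1 : ∫ x in Ω, (v x - vdiv e x) * v x
      ≤ ((∫ x in Ω, (v x - vdiv e x) ^ 2) + ∫ x in Ω, v x ^ 2) / 2 := by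
    rw [← integral_add iR iA, ← integral_div]
    refine integral_mono irv ((iR.add iA).div_const 2) fun x => ?_
    nlinarith [sq_nonneg (v x - vdiv e x - v x)]
  have hb2 : - ∫ x in Ω, (inner ℝ (gradient v x - e x) (e x) : ℝ)
      ≤ ((∫ x in Ω, ‖gradient v x - e x‖ ^ 2) + ∫ x in Ω, ‖e x‖ ^ 2) / 2 := by
    rw [← integral_add iS iB, ← integral_div, ← integral_neg]
    refine integral_mono ise.neg ((iS.add iB).div_const 2) fun x => ?_
    have h1 := abs_real_inner_le_norm (gradient v x - e x) (e x)
    have h2 := neg_abs_le (inner ℝ (gradient v x - e x) (e x) : ℝ)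
    nlinarith [sq_nonneg (‖gradient v x - e x‖ - ‖e x‖)]
  have step1 : (∫ x in Ω, v x ^ 2) + (∫ x in Ω, ‖e x‖ ^ 2)
      ≤ (∫ x in Ω, (v x - vdiv e x) ^ 2) + ∫ x in Ω, ‖gradient v x - e x‖ ^ 2 := by
    linarith [hAB, hb1, hb2]
  -- Young-type bound for the primal part
  have step2 : ∫ x in Ω, (v x + w x) ^ 2
      ≤ (1 + 1/γ) * (∫ x in Ω, v x ^ 2) + (1 + γ) * ∫ x in Ω, w x ^ 2 := by
    have hint : Integrable (fun x => (1 + 1/γ) * v x ^ 2 + (1 + γ) * w x ^ 2)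
        (volume.restrict Ω) := (iA.const_mul _).add (iW.const_mul _)
    calc ∫ x in Ω, (v x + w x) ^ 2
        ≤ ∫ x in Ω, ((1 + 1/γ) * v x ^ 2 + (1 + γ) * w x ^ 2) :=
          integral_mono_of_nonneg (Filter.Eventually.of_forall fun x => sq_nonneg _)
            hint (Filter.Eventually.of_forall fun x => young_sq hγ _ _)
      _ = (1 + 1/γ) * (∫ x in Ω, v x ^ 2) + (1 + γ) * ∫ x in Ω, w x ^ 2 := by
          rw [integral_add (iA.const_mul _) (iW.const_mul _), integral_const_mul, integral_const_mul]
  -- combine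
  have hB0 : 0 ≤ ∫ x in Ω, ‖e x‖ ^ 2 := integral_nonneg fun x => by positivity
  have hpos : (0:ℝ) ≤ 1 + 1/γ := by positivity
  nlinarith [mul_le_mul_of_nonneg_left step1 hpos,
    mul_nonneg (le_of_lt (by positivity : (0:ℝ) < 1/γ)) hB0]
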